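/- Let β ∈ (0,1), l_k = 4^k, γ_k = exp(4^{βk}), ρ_k = 1 - 1/l_k + iγ_k. Then ∑_{k=K+1}^∞ |log(G(l_k(1-ρ_k)) G(l_k(1-conj ρ_k)))| ≪ ∑_{k=K+1}^∞ 1/(l_k γ_k) ≪ exp(-4^{β(K+1)}) for all K ≥ 1. -/

import Mathlib

open Complex

/-- `G(z) = 1 - (e^{-z} - e^{-2z})/z` for `z ≠ 0`, with `G(0) = 0`. -/
noncomputable def G (z : ℂ) : ℂ :=
  if z = 0 then 0 else 1 - (Complex.exp (-z) - Complex.exp (-2 * z)) / z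

/-- `γ_k = exp(4^{βk})`. -/
noncomputable def γ (β : ℝ) (k : ℕ) : ℝ := Real.exp ((4:ℝ) ^ (β * k))

/-- `ρ_k = 1 - 4^{-k} + i γ_k`. -/
noncomputable def ρ (β : ℝ) (k : ℕ) : ℂ := 1 - 1 / 4 ^ k + Complex.I * (γ β k : ℝ)

/-! On the line `Re z = 1` the function `G` is `1 + O(1/|Im z|)`, since both exponentials in its
numerator have modulus at most `e⁻¹`. After scaling, `l_k (1 - ρ_k) = 1 - i l_k γ_k`, so the
`k`-th logarithm is `O(1/(l_k γ_k))` by `|log(1 + w)| ≤ 3|w|/2` for `|w| ≤ 1/2`. As `γ_k` increases with `k`, the tail sum is at most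
`exp(-4^{β(K+1)}) ∑ 4^{-k}`. -/

lemma norm_G_sub_one_le {z : ℂ} (hz : z ≠ 0) :
    ‖G z - 1‖ ≤ (Real.exp (-z.re) + Real.exp (-2 * z.re)) / ‖z‖ := by
  have hG : G z - 1 = -((Complex.exp (-z) - Complex.exp (-2 * z)) / z) := by
    rw [G, if_neg hz]; ring
  rw [hG, norm_neg, norm_div]
  gcongr
  refine (norm_sub_le _ _).trans_eq ?_
  simp [Complex.norm_exp]

lemma exp_neg_one_add_exp_neg_two_lt_one : Real.exp (-1) + Real.exp (-2) < 1 := by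
  have h1 : Real.exp (-1) * Real.exp 1 = 1 := by rw [← Real.exp_add]; norm_num
  have h2 : Real.exp (-2) < Real.exp (-1) := Real.exp_lt_exp.mpr (by norm_num)
  nlinarith [Real.exp_one_gt_d9, Real.exp_pos (-1)]

lemma norm_G_one_add_I_mul_sub_one_le {t : ℝ} (ht : t ≠ 0) :
    ‖G (1 + I * t) - 1‖ ≤ 1 / |t| := by
  have hz : (1 + I * t) ≠ 0 := fun h => by simpa using congrArg re h
  have him : |t| ≤ ‖1 + I * (t : ℂ)‖ := by
    simpa using abs_im_le_norm (1 + I * (t : ℂ))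
  refine (norm_G_sub_one_le hz).trans ?_
  have hre : (1 + I * (t : ℂ)).re = 1 := by simp
  rw [hre, mul_one]
  exact div_le_div₀ zero_le_one exp_neg_one_add_exp_neg_two_lt_one.le (abs_pos.mpr ht) him

lemma norm_log_mul_le {a b : ℂ} {ε : ℝ} (ha : ‖a - 1‖ ≤ ε) (hb : ‖b - 1‖ ≤ ε)
    (hε : ε ≤ 1 / 6) : ‖log (a * b)‖ ≤ 9 / 2 * ε := by
  have hε0 : 0 ≤ ε := (norm_nonneg _).trans ha
  have hab : a * b = 1 + ((a - 1) + (b - 1) + (a - 1) * (b - 1)) := by ring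
  have hw : ‖(a - 1) + (b - 1) + (a - 1) * (b - 1)‖ ≤ 3 * ε := by
    have hprod : ‖(a - 1) * (b - 1)‖ ≤ ε * ε := by
      rw [norm_mul]; exact mul_le_mul ha hb (norm_nonneg _) hε0
    calc _ ≤ ‖a - 1‖ + ‖b - 1‖ + ‖(a - 1) * (b - 1)‖ := norm_add₃_le
      _ ≤ 3 * ε := by nlinarith
  rw [hab]
  calc _ ≤ 3 / 2 * ‖(a - 1) + (b - 1) + (a - 1) * (b - 1)‖ :=
        norm_log_one_add_half_le_self (by linarith)
    _ ≤ 9 / 2 * ε := by linarith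

lemma norm_log_G_mul_G_le {t : ℝ} (ht : 6 ≤ t) :
    ‖log (G (1 - I * t) * G (1 + I * t))‖ ≤ 9 / 2 * (1 / t) := by
  have ht0 : 0 < t := by linarith
  have hneg : (1 : ℂ) - I * t = 1 + I * ((-t : ℝ) : ℂ) := by push_cast; ring
  refine norm_log_mul_le (ε := 1 / t) ?_ ?_ ?_
  · simpa [hneg, abs_of_pos ht0] using norm_G_one_add_I_mul_sub_one_le (neg_ne_zero.mpr ht0.ne')
  · simpa [abs_of_pos ht0] using norm_G_one_add_I_mul_sub_one_le ht0.ne'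
  · rw [div_le_div_iff₀ ht0 (by norm_num)]; linarith

lemma four_pow_mul_one_sub_ρ (β : ℝ) (n : ℕ) :
    (4 : ℂ) ^ n * (1 - ρ β n) = 1 - I * (((4 : ℝ) ^ n * γ β n : ℝ) : ℂ) := by
  have h4 : (4 : ℂ) ^ n ≠ 0 := pow_ne_zero _ (by norm_num)
  rw [ρ]
  push_cast
  field_simp
  ring

lemma four_pow_mul_one_sub_conj_ρ (β : ℝ) (n : ℕ) :
    (4 : ℂ) ^ n * (1 - (starRingEnd ℂ) (ρ β n)) = 1 + I * (((4 : ℝ) ^ n * γ β n : ℝ) : ℂ) := by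
  have h4 : (4 : ℂ) ^ n ≠ 0 := pow_ne_zero _ (by norm_num)
  rw [ρ]
  simp only [map_add, map_sub, map_one, map_div₀, map_pow, map_mul, conj_I, conj_ofReal,
    map_ofNat]
  push_cast
  field_simp
  ring

lemma one_le_γ (β : ℝ) (n : ℕ) : 1 ≤ γ β n :=
  Real.one_le_exp (by positivity)

lemma monotone_γ {β : ℝ} (hβ : 0 ≤ β) : Monotone (γ β) := fun m n hmn => by
  unfold γ
  gcongr
  norm_num

lemma one_div_four_pow_mul_γ_le {β : ℝ} (hβ : 0 ≤ β) (m k : ℕ) :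
    1 / ((4 : ℝ) ^ (m + k) * γ β (m + k)) ≤ Real.exp (-(4 : ℝ) ^ (β * m)) * (1 / 4) ^ k := by
  have hγ : Real.exp ((4 : ℝ) ^ (β * m)) ≤ γ β (m + k) := monotone_γ hβ (Nat.le_add_right m k)
  have h4 : (4 : ℝ) ^ k ≤ 4 ^ (m + k) := pow_le_pow_right₀ (by norm_num) (Nat.le_add_left k m)
  calc _ ≤ 1 / ((4 : ℝ) ^ k * Real.exp ((4 : ℝ) ^ (β * m))) :=
        one_div_le_one_div_of_le (by positivity) (by gcongr)
    _ = _ := by rw [Real.exp_neg, one_div_pow]; field_simp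

lemma summable_one_div_four_pow_mul_γ {β : ℝ} (hβ : 0 ≤ β) (m : ℕ) :
    Summable fun k : ℕ => 1 / ((4 : ℝ) ^ (m + k) * γ β (m + k)) :=
  .of_nonneg_of_le (fun k => by have := one_le_γ β (m + k); positivity)
    (one_div_four_pow_mul_γ_le hβ m)
    ((summable_geometric_of_lt_one (by norm_num) (by norm_num)).mul_left _)

lemma tsum_one_div_four_pow_mul_γ_le {β : ℝ} (hβ : 0 ≤ β) (m : ℕ) :
    ∑' k : ℕ, 1 / ((4 : ℝ) ^ (m + k) * γ β (m + k)) ≤ 4 / 3 * Real.exp (-(4 : ℝ) ^ (β * m)) := by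
  have hgeom := summable_geometric_of_lt_one (r := (1 / 4 : ℝ)) (by norm_num) (by norm_num)
  calc _ ≤ ∑' k : ℕ, Real.exp (-(4 : ℝ) ^ (β * m)) * (1 / 4) ^ k :=
        (summable_one_div_four_pow_mul_γ hβ m).tsum_le_tsum (one_div_four_pow_mul_γ_le hβ m)
          (hgeom.mul_left _)
    _ = 4 / 3 * Real.exp (-(4 : ℝ) ^ (β * m)) := by
        rw [tsum_mul_left, tsum_geometric_of_lt_one (by norm_num) (by norm_num)]
        ring

/-- `∑_{k>K} |log(G(l_k(1-ρ_k)) G(l_k(1-ρ̄_k)))| ≪ ∑_{k>K} 1/(l_k γ_k) ≪ exp(-4^{β(K+1)})`. -/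
theorem tail_bound (β : ℝ) (hβ : β ∈ Set.Ioo (0:ℝ) 1) :
    ∃ C > 0, ∀ K : ℕ, 1 ≤ K →
      (∑' k : ℕ, ‖Complex.log
          (G ((4:ℂ) ^ (K + 1 + k) * (1 - ρ β (K + 1 + k))) *
            G ((4:ℂ) ^ (K + 1 + k) * (1 - (starRingEnd ℂ) (ρ β (K + 1 + k)))))‖)
          ≤ C * ∑' k : ℕ, 1 / ((4:ℝ) ^ (K + 1 + k) * γ β (K + 1 + k)) ∧
      (∑' k : ℕ, 1 / ((4:ℝ) ^ (K + 1 + k) * γ β (K + 1 + k)))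
          ≤ C * Real.exp (-(4:ℝ) ^ (β * (K + 1))) := by
  have hβ0 : 0 ≤ β := hβ.1.le
  refine ⟨9 / 2, by norm_num, fun K hK => ⟨?_, ?_⟩⟩
  · have hterm : ∀ k : ℕ, ‖log (G ((4:ℂ) ^ (K + 1 + k) * (1 - ρ β (K + 1 + k))) *
        G ((4:ℂ) ^ (K + 1 + k) * (1 - (starRingEnd ℂ) (ρ β (K + 1 + k)))))‖
          ≤ 9 / 2 * (1 / ((4:ℝ) ^ (K + 1 + k) * γ β (K + 1 + k))) := fun k => by
      rw [four_pow_mul_one_sub_ρ, four_pow_mul_one_sub_conj_ρ]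
      refine norm_log_G_mul_G_le ?_
      have h16 : (16 : ℝ) ≤ 4 ^ (K + 1 + k) :=
        (pow_le_pow_right₀ (by norm_num) (by omega : 2 ≤ K + 1 + k)).trans_eq' (by norm_num)
      nlinarith [one_le_γ β (K + 1 + k)]
    have hsum := (summable_one_div_four_pow_mul_γ hβ0 (K + 1)).mul_left (9 / 2)
    rw [← tsum_mul_left]
    exact (hsum.of_nonneg_of_le (fun _ => norm_nonneg _) hterm).tsum_le_tsum hterm hsum
  · have := tsum_one_div_four_pow_mul_γ_le hβ0 (K + 1)
    push_cast at this
    linarith [Real.exp_pos (-(4:ℝ) ^ (β * (K + 1)))]
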